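/- arXiv:2001.11933 — 2 statements merged into one kernel-verified Lean document; each statement's English description precedes it below -/
import Mathlib

section
/- For all p, q ∈ ℝ³ one has the identity g(p,q)² (p⁰ + q⁰)² − 4|p × q|² = s(p,q) |p − q|². -/
noncomputable section

/-- Euclidean inner product on ℝ³. -/
def dot3 (p q : Fin 3 → ℝ) : ℝ := ∑ i, p i * q i

/-- The relativistic energy `p⁰ = √(m²c² + |p|²)`. -/
noncomputable def pZero (m c : ℝ) (p : Fin 3 → ℝ) : ℝ :=
  Real.sqrt (m ^ 2 * c ^ 2 + dot3 p p)

open Matrix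

lemma dot3_eq_dotProduct (p q : Fin 3 → ℝ) : dot3 p q = p ⬝ᵥ q := rfl

lemma dot3_self_nonneg (p : Fin 3 → ℝ) : 0 ≤ dot3 p p :=
  Finset.sum_nonneg fun i _ => mul_self_nonneg (p i)

lemma pZero_sq (m c : ℝ) (p : Fin 3 → ℝ) :
    pZero m c p ^ 2 = m ^ 2 * c ^ 2 + dot3 p p :=
  Real.sq_sqrt (add_nonneg (by positivity) (dot3_self_nonneg p))

lemma dot3_cross_self (p q : Fin 3 → ℝ) :
    dot3 (p ⨯₃ q) (p ⨯₃ q) = dot3 p p * dot3 q q - dot3 p q ^ 2 := by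
  simp only [dot3_eq_dotProduct, cross_dot_cross, dotProduct_comm q p, sq]

lemma dot3_sub_self (p q : Fin 3 → ℝ) :
    dot3 (p - q) (p - q) = dot3 p p - 2 * dot3 p q + dot3 q q := by
  simp only [dot3_eq_dotProduct, sub_dotProduct, dotProduct_sub, dotProduct_comm q p]
  ring

-- With `M = m²c²`, `P = |p|²`, `Q = |q|²`, `d = p·q`, the energies only enter through the mass
-- shell relations `ha`, `hb`.
lemma mass_shell_identity {R : Type*} [CommRing R] {a b M P Q : R} (d : R)
    (ha : a ^ 2 = M + P) (hb : b ^ 2 = M + Q) :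
    2 * (a * b - d - M) * (a + b) ^ 2 - 4 * (P * Q - d ^ 2)
      = 2 * (a * b - d + M) * (P - 2 * d + Q) := by
  have hab : (a * b) ^ 2 = (M + P) * (M + Q) := by rw [mul_pow, ha, hb]
  linear_combination 2 * (a * b - d - M) * (ha + hb) + 4 * hab

theorem stmt0_general (m c : ℝ) (p q : Fin 3 → ℝ) :
    (2 * (pZero m c p * pZero m c q - dot3 p q - m ^ 2 * c ^ 2)) *
        (pZero m c p + pZero m c q) ^ 2
      - 4 * dot3 (crossProduct p q) (crossProduct p q)
    = (2 * (pZero m c p * pZero m c q - dot3 p q + m ^ 2 * c ^ 2)) *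
        dot3 (p - q) (p - q) := by
  rw [dot3_cross_self, dot3_sub_self]
  exact mass_shell_identity _ (pZero_sq m c p) (pZero_sq m c q)

/-- For all `p, q ∈ ℝ³`:
`g(p,q)² (p⁰ + q⁰)² − 4|p × q|² = s(p,q) |p − q|²`, where
`s = 2(p⁰q⁰ − p·q + m²c²)` and `g² = 2(p⁰q⁰ − p·q − m²c²)`. -/
theorem stmt0 (m c : ℝ) (hm : 0 < m) (hc : 0 < c) (p q : Fin 3 → ℝ) :
    (2 * (pZero m c p * pZero m c q - dot3 p q - m ^ 2 * c ^ 2)) *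
        (pZero m c p + pZero m c q) ^ 2
      - 4 * dot3 (crossProduct p q) (crossProduct p q)
    = (2 * (pZero m c p * pZero m c q - dot3 p q + m ^ 2 * c ^ 2)) *
        dot3 (p - q) (p - q) :=
  stmt0_general m c p q
end
end

section
/- For all p, q ∈ ℝ³ one has m c |p − q| ≤ g(p,q) √(p⁰ q⁰) and g(p,q) ≤ |p − q|; equivalently, m²c² |p − q|² ≤ g(p,q)² p⁰ q⁰ and g(p,q)² ≤ |p − q|². -/
/-!
Write `M = m²c²`, `P = |p|²`, `Q = |q|²`, `s = p·q`. Since `(p⁰)² = M + P`, one has the Minkowski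
identity `g² = |p − q|² − (p⁰ − q⁰)²`, which gives `g ≤ |p − q|`. For the lower bound put
`u = p⁰q⁰ − M`; then `(u + M)² = (M + P)(M + Q)`, and this turns `g² p⁰q⁰ − M |p − q|²` into
`(u − s)² + (PQ − s²)`, which is nonnegative by Cauchy–Schwarz.
-/

noncomputable section

/-- The relativistic momentum `g(p,q) = √(2(p⁰q⁰ − p·q − m²c²))`. -/
noncomputable def gRel (m c : ℝ) (p q : Fin 3 → ℝ) : ℝ :=
  Real.sqrt (2 * (pZero m c p * pZero m c q - dot3 p q - m ^ 2 * c ^ 2))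

open RealInnerProductSpace

section Energy

variable {E : Type*} [SeminormedAddCommGroup E] {M : ℝ}

def energy (M : ℝ) (x : E) : ℝ := √(M + ‖x‖ ^ 2)

lemma energy_sq (hM : 0 ≤ M) (x : E) : energy M x ^ 2 = M + ‖x‖ ^ 2 :=
  Real.sq_sqrt (by positivity)

lemma energy_mul_energy_sq (hM : 0 ≤ M) (x y : E) :
    (energy M x * energy M y) ^ 2 = (M + ‖x‖ ^ 2) * (M + ‖y‖ ^ 2) := by
  rw [mul_pow, energy_sq hM, energy_sq hM]

lemma add_norm_mul_norm_le_energy_mul_energy (hM : 0 ≤ M) (x y : E) :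
    M + ‖x‖ * ‖y‖ ≤ energy M x * energy M y := by
  have hprod : 0 ≤ energy M x * energy M y := by unfold energy; positivity
  refine (pow_le_pow_iff_left₀ (by positivity) hprod two_ne_zero).1 ?_
  rw [energy_mul_energy_sq hM]
  nlinarith [sq_nonneg (‖x‖ - ‖y‖)]

end Energy

section InnerProductSpace

variable {E : Type*} [SeminormedAddCommGroup E] [InnerProductSpace ℝ E] {M : ℝ}

lemma add_inner_le_energy_mul_energy (hM : 0 ≤ M) (x y : E) :
    M + ⟪x, y⟫ ≤ energy M x * energy M y :=
  (add_le_add_right (real_inner_le_norm x y) M).trans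
    (add_norm_mul_norm_le_energy_mul_energy hM x y)

lemma two_mul_energy_mul_energy_sub_inner_le (hM : 0 ≤ M) (x y : E) :
    2 * (energy M x * energy M y - ⟪x, y⟫ - M) ≤ ‖x - y‖ ^ 2 := by
  have minkowski : ‖x - y‖ ^ 2 - (energy M x - energy M y) ^ 2
      = 2 * (energy M x * energy M y - ⟪x, y⟫ - M) := by
    linear_combination norm_sub_sq_real x y - energy_sq hM x - energy_sq hM y
  linarith [sq_nonneg (energy M x - energy M y)]

lemma mul_norm_sub_sq_le (hM : 0 ≤ M) (x y : E) :
    M * ‖x - y‖ ^ 2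
      ≤ 2 * (energy M x * energy M y - ⟪x, y⟫ - M) * (energy M x * energy M y) := by
  set u := energy M x * energy M y - M
  have hu : (u + M) ^ 2 = (M + ‖x‖ ^ 2) * (M + ‖y‖ ^ 2) := by
    simpa [u] using energy_mul_energy_sq hM x y
  have cauchy_schwarz : ⟪x, y⟫ ^ 2 ≤ ‖x‖ ^ 2 * ‖y‖ ^ 2 := by
    rw [← mul_pow, ← sq_abs]
    exact pow_le_pow_left₀ (abs_nonneg _) (abs_real_inner_le_norm x y) 2
  rw [show energy M x * energy M y = u + M by ring, norm_sub_sq_real]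
  linear_combination sq_nonneg (u - ⟪x, y⟫) + cauchy_schwarz - hu

end InnerProductSpace

lemma dot3_eq_inner (p q : Fin 3 → ℝ) :
    dot3 p q = ⟪WithLp.toLp 2 p, (WithLp.toLp 2 q : EuclideanSpace ℝ (Fin 3))⟫ := by
  simp [dot3, PiLp.inner_apply, mul_comm]

lemma dot3_self_eq_norm_sq (p : Fin 3 → ℝ) :
    dot3 p p = ‖(WithLp.toLp 2 p : EuclideanSpace ℝ (Fin 3))‖ ^ 2 := by
  rw [dot3_eq_inner, real_inner_self_eq_norm_sq]

lemma pZero_eq_energy (m c : ℝ) (p : Fin 3 → ℝ) :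
    pZero m c p = energy (m ^ 2 * c ^ 2) (WithLp.toLp 2 p : EuclideanSpace ℝ (Fin 3)) := by
  rw [pZero, energy, dot3_self_eq_norm_sq]

lemma gRel_sq (m c : ℝ) (p q : Fin 3 → ℝ) :
    gRel m c p q ^ 2
      = 2 * (pZero m c p * pZero m c q - dot3 p q - m ^ 2 * c ^ 2) := by
  refine Real.sq_sqrt ?_
  have := add_inner_le_energy_mul_energy (by positivity : 0 ≤ m ^ 2 * c ^ 2)
    (WithLp.toLp 2 p : EuclideanSpace ℝ (Fin 3)) (WithLp.toLp 2 q)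
  rw [pZero_eq_energy, pZero_eq_energy, dot3_eq_inner]
  linarith

theorem stmt5_general (m c : ℝ) (p q : Fin 3 → ℝ) :
    m * c * Real.sqrt (dot3 (p - q) (p - q))
        ≤ gRel m c p q * Real.sqrt (pZero m c p * pZero m c q)
      ∧ gRel m c p q ≤ Real.sqrt (dot3 (p - q) (p - q))
      ∧ m ^ 2 * c ^ 2 * dot3 (p - q) (p - q)
          ≤ (gRel m c p q) ^ 2 * (pZero m c p * pZero m c q)
      ∧ (gRel m c p q) ^ 2 ≤ dot3 (p - q) (p - q) := by
  have hM : 0 ≤ m ^ 2 * c ^ 2 := by positivity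
  have hD : dot3 (p - q) (p - q) = ‖WithLp.toLp 2 p - WithLp.toLp 2 q‖ ^ 2 := by
    rw [dot3_self_eq_norm_sq, WithLp.toLp_sub]
  have lower_sq : m ^ 2 * c ^ 2 * dot3 (p - q) (p - q)
      ≤ gRel m c p q ^ 2 * (pZero m c p * pZero m c q) := by
    rw [hD, gRel_sq, pZero_eq_energy, pZero_eq_energy, dot3_eq_inner]
    exact mul_norm_sub_sq_le hM _ _
  have upper_sq : gRel m c p q ^ 2 ≤ dot3 (p - q) (p - q) := by
    rw [hD, gRel_sq, pZero_eq_energy, pZero_eq_energy, dot3_eq_inner]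
    exact two_mul_energy_mul_energy_sub_inner_le hM _ _
  refine ⟨?_, (le_abs_self _).trans (Real.abs_le_sqrt upper_sq), lower_sq, upper_sq⟩
  calc m * c * √(dot3 (p - q) (p - q))
      ≤ |m * c| * √(dot3 (p - q) (p - q)) := by gcongr; exact le_abs_self _
    _ = √(m ^ 2 * c ^ 2 * dot3 (p - q) (p - q)) := by
      rw [Real.sqrt_mul hM, ← mul_pow, Real.sqrt_sq_eq_abs]
    _ ≤ √(gRel m c p q ^ 2 * (pZero m c p * pZero m c q)) := Real.sqrt_le_sqrt lower_sq
    _ = gRel m c p q * √(pZero m c p * pZero m c q) := by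
      rw [Real.sqrt_mul (sq_nonneg _), Real.sqrt_sq (by unfold gRel; positivity)]

/-- For all `p, q ∈ ℝ³`:
`mc|p − q| ≤ g(p,q)√(p⁰q⁰)` and `g(p,q) ≤ |p − q|`; equivalently,
`m²c²|p − q|² ≤ g(p,q)² p⁰q⁰` and `g(p,q)² ≤ |p − q|²`. -/
theorem stmt5 (m c : ℝ) (hm : 0 < m) (hc : 0 < c) (p q : Fin 3 → ℝ) :
    m * c * Real.sqrt (dot3 (p - q) (p - q))
        ≤ gRel m c p q * Real.sqrt (pZero m c p * pZero m c q)
      ∧ gRel m c p q ≤ Real.sqrt (dot3 (p - q) (p - q))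
      ∧ m ^ 2 * c ^ 2 * dot3 (p - q) (p - q)
          ≤ (gRel m c p q) ^ 2 * (pZero m c p * pZero m c q)
      ∧ (gRel m c p q) ^ 2 ≤ dot3 (p - q) (p - q) :=
  stmt5_general m c p q
end
end
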